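/- arXiv:1607.02917 — 5 statements merged into one kernel-verified Lean document; each statement's English description precedes it below -/
import Mathlib

section
/- Let the uncertainty model be independent, i.e., each agent a has its own probability distribution over linear preference orders and these distributions are independent. Define the dominance set D_m(w) = {w} ∪ {w' : m certainly prefers w' to w} (and symmetrically D_w(m)), where 'certainly prefers' means prefers with probability 1. Then a matching μ is stable with probability 1 if and only if for every man–woman pair (m,w), either μ(m) ∈ D_m(w) or μ(w) ∈ D_w(m). -/
open Finset
open scoped Classical BigOperators

/-- A strict preference order over `Fin n`, encoded as a rank bijection:
`P a < P b` means the agent prefers `a` to `b`. -/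
abbrev Pref (n : ℕ) := Equiv.Perm (Fin n)

/-- The pair `(m, w)` blocks the matching `μ` under profile `(PM, PW)`. -/
def blocks {n : ℕ} (μ : Equiv.Perm (Fin n)) (PM PW : Fin n → Pref n) (m w : Fin n) : Prop :=
  μ m ≠ w ∧ PM m w < PM m (μ m) ∧ PW w m < PW w (μ.symm w)

/-- `μ` is stable under the profile `(PM, PW)`. -/
def stable {n : ℕ} (μ : Equiv.Perm (Fin n)) (PM PW : Fin n → Pref n) : Prop :=
  ∀ m w, ¬ blocks μ PM PW m w

/-- `p` is a probability distribution over preference orders. -/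
def isDist {n : ℕ} (p : Pref n → ℝ) : Prop := (∀ P, 0 ≤ p P) ∧ ∑ P, p P = 1

/-- Stability probability of `μ` in the independent (lottery-style) model where each
man `i` draws from `pM i` and each woman `i` draws from `pW i`, independently. -/
noncomputable def stabProb {n : ℕ} (pM pW : Fin n → Pref n → ℝ) (μ : Equiv.Perm (Fin n)) : ℝ :=
  ∑ PM : Fin n → Pref n, ∑ PW : Fin n → Pref n,
    if stable μ PM PW then (∏ i, pM i (PM i)) * (∏ i, pW i (PW i)) else 0

/-- Agent with distribution `p` certainly prefers `a` to `b` (prefers with probability 1). -/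
def certPrefers {n : ℕ} (p : Pref n → ℝ) (a b : Fin n) : Prop :=
  ∑ P ∈ Finset.univ.filter (fun P : Pref n => P a < P b), p P = 1

lemma cert_iff {n : ℕ} (p : Pref n → ℝ) (hp : isDist p) (a b : Fin n) :
    certPrefers p a b ↔ ∀ P, p P ≠ 0 → P a < P b := by
  obtain ⟨hnn, hsum⟩ := hp
  unfold certPrefers
  rw [← hsum, ← Finset.sum_filter_add_sum_filter_not Finset.univ (fun P : Pref n => P a < P b)]
  constructor
  · intro h P hP
    by_contra hlt
    have h0 : ∑ P ∈ Finset.univ.filter (fun P : Pref n => ¬ P a < P b), p P = 0 := by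
      linarith
    have := (Finset.sum_eq_zero_iff_of_nonneg (fun P _ => hnn P)).mp h0 P
      (Finset.mem_filter.mpr ⟨Finset.mem_univ P, hlt⟩)
    exact hP this
  · intro h
    have h0 : ∑ P ∈ Finset.univ.filter (fun P : Pref n => ¬ P a < P b), p P = 0 := by
      apply Finset.sum_eq_zero
      intro P hP
      simp only [Finset.mem_filter] at hP
      by_contra hne
      exact hP.2 (h P hne)
    linarith

lemma support_exists {n : ℕ} (p : Pref n → ℝ) (hp : isDist p) : ∃ P, p P ≠ 0 := by
  by_contra h
  push_neg at h
  have : ∑ P : Pref n, p P = 0 := Finset.sum_eq_zero (fun P _ => h P)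
  rw [hp.2] at this; norm_num at this


/-- In an independent uncertainty model, a matching `μ` is stable with
probability 1 iff for every pair `(m, w)`, `μ(m) ∈ D_m(w)` or `μ(w) ∈ D_w(m)`,
where `D_m(w) = {w} ∪ {w' : m certainly prefers w' to w}`. -/
theorem statement0 {n : ℕ} (pM pW : Fin n → Pref n → ℝ)
    (hM : ∀ i, isDist (pM i)) (hW : ∀ i, isDist (pW i)) (μ : Equiv.Perm (Fin n)) :
    stabProb pM pW μ = 1 ↔
      ∀ m w : Fin n,
        μ m ∈ ({w} ∪ {w' | certPrefers (pM m) w' w} : Set (Fin n)) ∨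
        μ.symm w ∈ ({m} ∪ {m' | certPrefers (pW w) m' m} : Set (Fin n)) := by
  set q : (Fin n → Pref n) → (Fin n → Pref n) → ℝ :=
    fun PM PW => (∏ i, pM i (PM i)) * (∏ i, pW i (PW i)) with hq
  have hqnn : ∀ PM PW, 0 ≤ q PM PW := fun PM PW =>
    mul_nonneg (Finset.prod_nonneg fun i _ => (hM i).1 _)
      (Finset.prod_nonneg fun i _ => (hW i).1 _)
  have total : ∑ PM : Fin n → Pref n, ∑ PW : Fin n → Pref n, q PM PW = 1 := by
    have h1 : ∑ PM : Fin n → Pref n, ∏ i, pM i (PM i) = 1 := by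
      rw [← Fintype.prod_sum]
      simp [(hM _).2]
    have h2 : ∑ PW : Fin n → Pref n, ∏ i, pW i (PW i) = 1 := by
      rw [← Fintype.prod_sum]
      simp [(hW _).2]
    calc ∑ PM : Fin n → Pref n, ∑ PW : Fin n → Pref n, q PM PW
        = (∑ PM : Fin n → Pref n, ∏ i, pM i (PM i)) *
            (∑ PW : Fin n → Pref n, ∏ i, pW i (PW i)) := by
          rw [Finset.sum_mul_sum]
      _ = 1 := by rw [h1, h2, mul_one]
  have diff : 1 - stabProb pM pW μ =
      ∑ PM : Fin n → Pref n, ∑ PW : Fin n → Pref n,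
        (if stable μ PM PW then 0 else q PM PW) := by
    rw [← total]
    unfold stabProb
    rw [← Finset.sum_sub_distrib]
    apply Finset.sum_congr rfl
    intro PM _
    rw [← Finset.sum_sub_distrib]
    apply Finset.sum_congr rfl
    intro PW _
    by_cases h : stable μ PM PW <;> simp [h, hq]
  have key : stabProb pM pW μ = 1 ↔ ∀ PM PW : Fin n → Pref n,
      (∀ i, pM i (PM i) ≠ 0) → (∀ i, pW i (PW i) ≠ 0) → stable μ PM PW := by
    constructor
    · intro h PM PW hPM hPW
      have hz : ∑ PM : Fin n → Pref n, ∑ PW : Fin n → Pref n,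
          (if stable μ PM PW then 0 else q PM PW) = 0 := by
        rw [← diff, h]; ring
      have h1 := (Finset.sum_eq_zero_iff_of_nonneg
        (fun PM _ => Finset.sum_nonneg fun PW _ => by
          by_cases h : stable μ PM PW <;> simp [h, hqnn])).mp hz PM (Finset.mem_univ _)
      have h2 := (Finset.sum_eq_zero_iff_of_nonneg
        (fun PW _ => by
          by_cases h : stable μ PM PW <;> simp [h, hqnn])).mp h1 PW (Finset.mem_univ _)
      by_contra hstab
      rw [if_neg hstab] at h2
      have : q PM PW ≠ 0 := by
        simp only [hq]
        exact mul_ne_zero (Finset.prod_ne_zero_iff.mpr fun i _ => hPM i)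
          (Finset.prod_ne_zero_iff.mpr fun i _ => hPW i)
      exact this h2
    · intro h
      have hz : ∑ PM : Fin n → Pref n, ∑ PW : Fin n → Pref n,
          (if stable μ PM PW then 0 else q PM PW) = 0 := by
        apply Finset.sum_eq_zero
        intro PM _
        apply Finset.sum_eq_zero
        intro PW _
        by_cases hs : stable μ PM PW
        · simp [hs]
        · rw [if_neg hs]
          by_contra hqne
          have hM' : ∀ i, pM i (PM i) ≠ 0 := by
            intro i
            by_contra h0
            apply hqne
            simp only [hq]
            rw [Finset.prod_eq_zero (f := fun i => pM i (PM i)) (Finset.mem_univ i) h0, zero_mul]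
          have hW' : ∀ i, pW i (PW i) ≠ 0 := by
            intro i
            by_contra h0
            apply hqne
            simp only [hq]
            rw [Finset.prod_eq_zero (f := fun i => pW i (PW i)) (Finset.mem_univ i) h0, mul_zero]
          exact hs (h PM PW hM' hW')
      linarith [diff, hz]
  rw [key]
  constructor
  · -- support-stability implies the dominance condition
    intro h m w
    by_contra hcon
    push_neg at hcon
    obtain ⟨hc1, hc2⟩ := hcon
    simp only [Set.mem_union, Set.mem_singleton_iff, Set.mem_setOf_eq, not_or] at hc1 hc2
    obtain ⟨hne1, hnc1⟩ := hc1
    obtain ⟨hne2, hnc2⟩ := hc2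
    rw [cert_iff _ (hM m)] at hnc1
    rw [cert_iff _ (hW w)] at hnc2
    push_neg at hnc1 hnc2
    obtain ⟨Pm, hPm, hPmlt⟩ := hnc1
    obtain ⟨Qw, hQw, hQwlt⟩ := hnc2
    have hPm' : Pm w < Pm (μ m) :=
      hPmlt.lt_of_ne (fun e => hne1 (Pm.injective e).symm)
    have hQw' : Qw m < Qw (μ.symm w) :=
      hQwlt.lt_of_ne (fun e => hne2 (Qw.injective e).symm)
    set PM : Fin n → Pref n :=
      Function.update (fun i => Classical.choose (support_exists (pM i) (hM i))) m Pm with hPM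
    set PW : Fin n → Pref n :=
      Function.update (fun i => Classical.choose (support_exists (pW i) (hW i))) w Qw with hPW
    have hs := h PM PW
      (fun i => by
        by_cases hi : i = m
        · subst hi; simpa [hPM] using hPm
        · simpa [hPM, Function.update_of_ne hi] using
            Classical.choose_spec (support_exists (pM i) (hM i)))
      (fun i => by
        by_cases hi : i = w
        · subst hi; simpa [hPW] using hQw
        · simpa [hPW, Function.update_of_ne hi] using
            Classical.choose_spec (support_exists (pW i) (hW i)))
    apply hs m w
    refine ⟨hne1, ?_, ?_⟩
    · simpa [hPM] using hPm'
    · simpa [hPW] using hQw'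
  · -- dominance condition implies support-stability
    intro h PM PW hPM hPW m w hb
    obtain ⟨hne, h1, h2⟩ := hb
    rcases h m w with hcase | hcase
    · rcases hcase with hcase | hcase
      · exact hne (by simpa using hcase)
      · have := (cert_iff _ (hM m) _ _).mp hcase (PM m) (hPM m)
        exact lt_asymm h1 this
    · rcases hcase with hcase | hcase
      · simp only [Set.mem_singleton_iff] at hcase
        exact hne ((Equiv.symm_apply_eq μ).mp hcase).symm
      · have := (cert_iff _ (hW w) _ _).mp hcase (PW w) (hPW w)
        exact lt_asymm h2 this
end

section
/- In an independent uncertainty model, a matching μ is stable with probability 1 if and only if there is no unmatched pair (m,w) such that it is not the case that m certainly prefers μ(m) to w and it is not the case that w certainly prefers μ(w) to m (i.e., μ admits no very weakly blocking pair). -/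
open Finset
open scoped Classical BigOperators

/-!
Stability with probability 1 means stability under every profile of positive probability, i.e.
every profile in which each agent's order lies in the support of its distribution; likewise
`certPrefers p a b` fails iff some order in the support of `p` ranks `b` above `a`. So a blocking
pair of a supported profile is very weakly blocking, and a very weakly blocking pair `(m, w)`
blocks any supported profile that gives `m` and `w` their witnessing orders.
-/

theorem sum_ite_eq_sum_iff {ι M : Type*} [Fintype ι] [AddCommMonoid M] [PartialOrder M]
    [IsOrderedCancelAddMonoid M] {f : ι → M} (hf : ∀ i, 0 ≤ f i) (p : ι → Prop)
    [DecidablePred p] :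
    (∑ i, if p i then f i else 0) = ∑ i, f i ↔ ∀ i, f i ≠ 0 → p i := by
  rw [Finset.sum_eq_sum_iff_of_le fun i _ => by split_ifs; exacts [le_rfl, hf i]]
  refine forall_congr' fun i => ?_
  by_cases h : p i <;> simp [h, eq_comm]

section Profiles

variable {ι α : Type*}

def profileProb [Fintype ι] (p : ι → α → ℝ) (P : ι → α) : ℝ := ∏ i, p i (P i)

theorem profileProb_nonneg [Fintype ι] {p : ι → α → ℝ} (hp : ∀ i a, 0 ≤ p i a)
    (P : ι → α) :
    0 ≤ profileProb p P :=
  Finset.prod_nonneg fun i _ => hp i (P i)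

theorem sum_profileProb [Fintype ι] [Fintype α] [DecidableEq ι] {p : ι → α → ℝ}
    (hp : ∀ i, ∑ a, p i a = 1) :
    ∑ P, profileProb p P = 1 := by
  simp only [profileProb, ← Fintype.prod_sum, hp, Finset.prod_const_one]

theorem profileProb_ne_zero_iff [Fintype ι] {p : ι → α → ℝ} {P : ι → α} :
    profileProb p P ≠ 0 ↔ ∀ i, p i (P i) ≠ 0 := by
  simp [profileProb, Finset.prod_ne_zero_iff]

theorem exists_supported_profile_eq [Fintype α] [DecidableEq ι] {p : ι → α → ℝ}
    (hp : ∀ i, ∑ a, p i a = 1) {i₀ : ι} {a₀ : α} (ha₀ : p i₀ a₀ ≠ 0) :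
    ∃ P : ι → α, (∀ i, p i (P i) ≠ 0) ∧ P i₀ = a₀ := by
  have hsupp : ∀ i, ∃ a, p i a ≠ 0 := fun i => by
    obtain ⟨a, -, ha⟩ := Finset.exists_ne_zero_of_sum_ne_zero (s := Finset.univ)
      (hp i ▸ one_ne_zero : ∑ a, p i a ≠ 0)
    exact ⟨a, ha⟩
  choose Q hQ using hsupp
  refine ⟨Function.update Q i₀ a₀, fun i => ?_, Function.update_self ..⟩
  by_cases hi : i = i₀
  · subst hi; simpa using ha₀
  · simpa [hi] using hQ i

end Profiles

theorem stabProb_eq_one_iff {n : ℕ} {pM pW : Fin n → Pref n → ℝ}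
    (hM : ∀ i, isDist (pM i)) (hW : ∀ i, isDist (pW i)) (μ : Equiv.Perm (Fin n)) :
    stabProb pM pW μ = 1 ↔ ∀ PM PW : Fin n → Pref n,
      (∀ i, pM i (PM i) ≠ 0) → (∀ i, pW i (PW i) ≠ 0) → stable μ PM PW := by
  have htotal : ∑ P : (Fin n → Pref n) × (Fin n → Pref n),
      profileProb pM P.1 * profileProb pW P.2 = 1 := by
    rw [Fintype.sum_prod_type' fun PM PW => profileProb pM PM * profileProb pW PW,
      ← Fintype.sum_mul_sum, sum_profileProb fun i => (hM i).2,
      sum_profileProb fun i => (hW i).2, one_mul]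
  have hnonneg : ∀ P : (Fin n → Pref n) × (Fin n → Pref n),
      0 ≤ profileProb pM P.1 * profileProb pW P.2 := fun P =>
    mul_nonneg (profileProb_nonneg (fun i => (hM i).1) _)
      (profileProb_nonneg (fun i => (hW i).1) _)
  change (∑ PM, ∑ PW, if stable μ PM PW then profileProb pM PM * profileProb pW PW else 0) = 1
    ↔ _
  rw [← Fintype.sum_prod_type' (fun PM PW => if stable μ PM PW then _ else 0), ← htotal,
    sum_ite_eq_sum_iff hnonneg]
  simp only [Prod.forall, mul_ne_zero_iff, profileProb_ne_zero_iff, and_imp]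

theorem certPrefers_iff {n : ℕ} {p : Pref n → ℝ} (hp : isDist p) (a b : Fin n) :
    certPrefers p a b ↔ ∀ P : Pref n, p P ≠ 0 → P a < P b := by
  rw [certPrefers, Finset.sum_filter, ← hp.2, sum_ite_eq_sum_iff hp.1]

theorem not_certPrefers_iff {n : ℕ} {p : Pref n → ℝ} (hp : isDist p) {a b : Fin n}
    (hab : a ≠ b) :
    ¬ certPrefers p a b ↔ ∃ P : Pref n, p P ≠ 0 ∧ P b < P a := by
  rw [certPrefers_iff hp]
  simp only [not_forall, not_lt, exists_prop]
  refine exists_congr fun P => and_congr_right fun _ => ?_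
  exact ⟨fun h => h.lt_of_ne (P.injective.ne hab.symm), le_of_lt⟩

/-- In an independent uncertainty model, `μ` is stable with probability 1
iff there is no unmatched pair `(m, w)` that very weakly blocks `μ`, i.e. such that
`m` does not certainly prefer `μ(m)` to `w` and `w` does not certainly prefer `μ(w)` to `m`. -/
theorem statement1 {n : ℕ} (pM pW : Fin n → Pref n → ℝ)
    (hM : ∀ i, isDist (pM i)) (hW : ∀ i, isDist (pW i)) (μ : Equiv.Perm (Fin n)) :
    stabProb pM pW μ = 1 ↔
      ¬ ∃ m w : Fin n, μ m ≠ w ∧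
        ¬ certPrefers (pM m) (μ m) w ∧ ¬ certPrefers (pW w) (μ.symm w) m := by
  rw [stabProb_eq_one_iff hM hW]
  constructor
  · rintro hstable ⟨m, w, hmw, hm, hw⟩
    have hwm : μ.symm w ≠ m := fun h => hmw (μ.symm_apply_eq.1 h).symm
    obtain ⟨Pm, hPm, hm⟩ := (not_certPrefers_iff (hM m) hmw).1 hm
    obtain ⟨Pw, hPw, hw⟩ := (not_certPrefers_iff (hW w) hwm).1 hw
    obtain ⟨PM, hPM, rfl⟩ := exists_supported_profile_eq (fun i => (hM i).2) hPm
    obtain ⟨PW, hPW, rfl⟩ := exists_supported_profile_eq (fun i => (hW i).2) hPw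
    exact hstable PM PW hPM hPW m w ⟨hmw, hm, hw⟩
  · rintro hno PM PW hPM hPW m w ⟨hmw, hm, hw⟩
    have hwm : μ.symm w ≠ m := fun h => hmw (μ.symm_apply_eq.1 h).symm
    exact hno ⟨m, w, hmw, (not_certPrefers_iff (hM m) hmw).2 ⟨_, hPM m, hm⟩,
      (not_certPrefers_iff (hW w) hwm).2 ⟨_, hPW w, hw⟩⟩
end

section
/- Let there be n men and n women where every woman is indifferent among all men (her linear order is drawn uniformly at random from all n! orders, independently across women) and every man has the same fixed strict preference order w1 ≻ w2 ≻ ⋯ ≻ wn over the women. Then every perfect matching has stability probability exactly 1/n!. -/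
open Finset
open scoped Classical BigOperators

/-- Stability probability when the men's preferences `PM` are certain and each woman `i`
independently draws her order from the distribution `pW i`. -/
noncomputable def stabProbW {n : ℕ} (PM : Fin n → Pref n) (pW : Fin n → Pref n → ℝ)
    (μ : Equiv.Perm (Fin n)) : ℝ :=
  ∑ PW : Fin n → Pref n, if stable μ PM PW then ∏ i, pW i (PW i) else 0

section Aux

variable {n : ℕ}

lemma swap_mem_of_mem (T : Finset (Fin n)) {x t : Fin n} (hx : x ∈ T) (ht : t ∈ T)
    {m : Fin n} (hm : m ∈ T) : Equiv.swap x t m ∈ T := by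
  rcases eq_or_ne m x with rfl | hmx
  · simpa [Equiv.swap_apply_left] using ht
  · rcases eq_or_ne m t with rfl | hmt
    · simpa [Equiv.swap_apply_right] using hx
    · simpa [Equiv.swap_apply_of_ne_of_ne hmx hmt] using hm

lemma cardA_eq (T : Finset (Fin n)) {x t : Fin n} (hx : x ∈ T) (ht : t ∈ T) :
    (univ.filter (fun P : Equiv.Perm (Fin n) => ∀ m ∈ T, P x ≤ P m)).card
      = (univ.filter (fun P : Equiv.Perm (Fin n) => ∀ m ∈ T, P t ≤ P m)).card := by
  apply Finset.card_bij (fun P _ => P * Equiv.swap x t)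
  · intro P hP
    simp only [mem_filter, mem_univ, true_and] at hP ⊢
    intro m hm
    have hswap : Equiv.swap x t m ∈ T := swap_mem_of_mem T hx ht hm
    simpa [Equiv.Perm.mul_apply, Equiv.swap_apply_right] using hP _ hswap
  · intro P _ Q _ h
    have h2 := congrArg (· * Equiv.swap x t) h
    simpa [mul_assoc, Equiv.swap_mul_self] using h2
  · intro P hP
    refine ⟨P * Equiv.swap x t, ?_, by simp [mul_assoc, Equiv.swap_mul_self]⟩
    simp only [mem_filter, mem_univ, true_and] at hP ⊢
    intro m hm
    have hswap : Equiv.swap x t m ∈ T := by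
      have h4 := swap_mem_of_mem T ht hx hm
      rwa [Equiv.swap_comm] at h4
    have h3 := hP _ hswap
    simpa [Equiv.Perm.mul_apply, Equiv.swap_apply_left] using h3

lemma card_min_filter (T : Finset (Fin n)) {x : Fin n} (hx : x ∈ T) :
    (univ.filter (fun P : Equiv.Perm (Fin n) => ∀ m ∈ T, P x ≤ P m)).card * T.card
      = Nat.factorial n := by
  have hcover : (univ : Finset (Equiv.Perm (Fin n)))
      = T.biUnion (fun t => univ.filter (fun P => ∀ m ∈ T, P t ≤ P m)) := by
    ext P
    simp only [mem_univ, true_iff, mem_biUnion, mem_filter]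
    obtain ⟨t, ht, hmin⟩ := T.exists_min_image P ⟨x, hx⟩
    exact ⟨t, ht, trivial, hmin⟩
  have hdisj : ∀ t ∈ T, ∀ s ∈ T, t ≠ s →
      Disjoint (univ.filter (fun P : Equiv.Perm (Fin n) => ∀ m ∈ T, P t ≤ P m))
        (univ.filter (fun P => ∀ m ∈ T, P s ≤ P m)) := by
    intro t ht s hs hts
    rw [Finset.disjoint_left]
    intro P hPt hPs
    simp only [mem_filter, mem_univ, true_and] at hPt hPs
    exact hts (P.injective (le_antisymm (hPt s hs) (hPs t ht)))
  have hfact : Nat.factorial n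
      = ∑ t ∈ T, (univ.filter (fun P : Equiv.Perm (Fin n) => ∀ m ∈ T, P t ≤ P m)).card := by
    rw [← Finset.card_biUnion hdisj, ← hcover, Finset.card_univ, Fintype.card_perm,
      Fintype.card_fin]
  rw [hfact, Finset.sum_congr rfl (fun t ht => (cardA_eq T ht hx)), Finset.sum_const,
    smul_eq_mul, mul_comm]

lemma prod_sub_eq_factorial (n : ℕ) : ∏ i : Fin n, (n - (i : ℕ)) = Nat.factorial n := by
  rw [Fin.prod_univ_eq_prod_range (fun i => n - i) n]
  have h : ∀ j ∈ Finset.range n, n - j = (fun i => i + 1) (n - 1 - j) := by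
    intro j hj
    have hj' : j < n := Finset.mem_range.mp hj
    simp only
    omega
  rw [Finset.prod_congr rfl h, Finset.prod_range_reflect (fun i => i + 1) n]
  exact Finset.prod_range_add_one_eq_factorial n

end Aux

/-- if every man has the identical strict order `w₁ ≻ w₂ ≻ ⋯ ≻ wₙ`
(the identity rank) and every woman's order is uniformly random over all `n!` strict
orders (independently), then every perfect matching has stability probability `1/n!`. -/
theorem statement3 {n : ℕ} (μ : Equiv.Perm (Fin n)) :
    stabProbW (fun _ => (1 : Pref n)) (fun _ _ => ((Nat.factorial n : ℝ))⁻¹) μ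
      = ((Nat.factorial n : ℝ))⁻¹ := by
  classical
  set c : ℝ := ((Nat.factorial n : ℝ))⁻¹ with hc
  set T : Fin n → Finset (Fin n) := fun w => univ.filter (fun m => w ≤ μ m) with hT
  set cond : Fin n → Equiv.Perm (Fin n) → Prop :=
    fun w P => ∀ m ∈ T w, P (μ.symm w) ≤ P m with hcond
  have hxT : ∀ w, μ.symm w ∈ T w := by
    intro w; simp [hT]
  have hstab : ∀ PW : Fin n → Pref n,
      stable μ (fun _ => (1 : Pref n)) PW ↔ ∀ w, cond w (PW w) := by
    intro PW
    constructor
    · intro hst w m hm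
      simp only [hT, mem_filter, mem_univ, true_and] at hm
      rcases eq_or_lt_of_le hm with heq | hlt
      · have hmx : m = μ.symm w := by
          apply μ.injective; rw [Equiv.apply_symm_apply]; exact heq.symm
        rw [hmx]
      · have hb := hst m w
        simp only [blocks, not_and, Equiv.Perm.one_apply] at hb
        have hne : μ m ≠ w := fun h => absurd h.symm (ne_of_lt hlt)
        exact le_of_not_gt (hb hne hlt)
    · intro h m w hb
      obtain ⟨hne, hlt, hPW⟩ := hb
      simp only [Equiv.Perm.one_apply] at hlt
      have hm : m ∈ T w := by simp [hT, le_of_lt hlt]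
      exact absurd (h w m hm) (not_le.mpr hPW)
  have hrw : stabProbW (fun _ => (1 : Pref n)) (fun _ _ => c) μ
      = ∑ PW : Fin n → Pref n, ∏ w : Fin n, (if cond w (PW w) then c else 0) := by
    unfold stabProbW
    refine Finset.sum_congr rfl (fun PW _ => ?_)
    by_cases h : stable μ (fun _ => (1 : Pref n)) PW
    · rw [if_pos h]
      have h2 := (hstab PW).mp h
      exact (Finset.prod_congr rfl (fun w _ => (if_pos (h2 w)).symm))
    · rw [if_neg h]
      obtain ⟨w, hw⟩ := not_forall.mp ((hstab PW).not.mp h)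
      exact (Finset.prod_eq_zero (mem_univ w)
        (show (if cond w (PW w) then c else 0) = 0 from if_neg hw)).symm
  have hps : (∑ PW : Fin n → Pref n, ∏ w : Fin n, (if cond w (PW w) then c else 0))
      = ∏ w : Fin n, ∑ P : Pref n, (if cond w P then c else 0) := by
    rw [Finset.prod_univ_sum (fun _ => (univ : Finset (Pref n)))
      (fun w P => if cond w P then c else 0), Fintype.piFinset_univ]
  rw [hrw, hps]
  have hcardT : ∀ w : Fin n, (T w).card = n - (w : ℕ) := by
    intro w
    have hTeq : T w = (Finset.Ici w).map ⟨μ.symm, μ.symm.injective⟩ := by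
      ext m
      simp only [hT, mem_filter, mem_univ, true_and, Finset.mem_map, Finset.mem_Ici,
        Function.Embedding.coeFn_mk]
      constructor
      · intro h; exact ⟨μ m, h, μ.symm_apply_apply m⟩
      · rintro ⟨v, hv, rfl⟩; simpa using hv
    rw [hTeq, Finset.card_map, Fin.card_Ici]
  have hfac : ∀ w : Fin n, (∑ P : Equiv.Perm (Fin n), if cond w P then c else 0)
      = ((n - (w : ℕ) : ℕ) : ℝ)⁻¹ := by
    intro w
    rw [← Finset.sum_filter, Finset.sum_const, nsmul_eq_mul, hc]
    have hkey := card_min_filter (T w) (hxT w)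
    rw [hcardT w] at hkey
    have h1 : ((univ.filter (fun P => cond w P)).card : ℝ) * ((n - (w : ℕ) : ℕ) : ℝ)
        = (Nat.factorial n : ℝ) := by exact_mod_cast hkey
    have hwlt : (w : ℕ) < n := w.isLt
    have hnw : ((n - (w : ℕ) : ℕ) : ℝ) ≠ 0 := by
      have h0 : n - (w : ℕ) ≠ 0 := by omega
      exact_mod_cast h0
    have hfne : (Nat.factorial n : ℝ) ≠ 0 := by
      exact_mod_cast n.factorial_ne_zero
    have hX : ((univ.filter (fun P => cond w P)).card : ℝ) ≠ 0 := by
      intro h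
      rw [h, zero_mul] at h1
      exact hfne h1.symm
    rw [← h1, mul_inv, ← mul_assoc, mul_inv_cancel₀ hX, one_mul]
  rw [Finset.prod_congr rfl (fun w _ => hfac w), Finset.prod_inv_distrib,
    ← Nat.cast_prod, prod_sub_eq_factorial]
end

section
/- In the compact indifference model with men having strict (certain) preferences, let μ be a matching and for a woman w let k(w) be the number of men m ≠ μ(w) such that w ≻_m μ(m) and w is indifferent between m and μ(w) (m lies in the same tie as μ(w) in w's weak order). If no man m with w ≻_m μ(m) is strictly preferred by w to μ(w), then the probability that w is involved in no blocking pair equals 1/(k(w)+1), and the stability probability of μ equals the product over all women w of 1/(k(w)+1). -/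
open Finset
open scoped Classical BigOperators

/-- `P` is a linear extension of the weak order with tie-classes given by rank `r`
(smaller `r`-value means strictly preferred; equal `r`-values form a tie). -/
def IsExt {n : ℕ} (r : Fin n → ℕ) (P : Pref n) : Prop := ∀ a b, r a < r b → P a < P b

/-- The uniform distribution over the linear extensions of the weak order `r`. -/
noncomputable def unifExt {n : ℕ} (r : Fin n → ℕ) : Pref n → ℝ := fun P =>
  if IsExt r P then ((Finset.univ.filter fun Q : Pref n => IsExt r Q).card : ℝ)⁻¹ else 0

/-!
A man `m` who prefers `w` to his partner blocks with `w` exactly when her realized order ranks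
him above `μ(w)`. Her weak order never puts such a man strictly above `μ(w)`, so in a linear
extension this can only happen for the `k(w)` men tied with `μ(w)`: `w` is in no blocking pair
iff her order ranks `μ(w)` first among these `k(w) + 1` men. Swapping two tied men maps linear
extensions bijectively onto linear extensions, so each of them is first equally often, which
gives `1/(k(w)+1)`. Since `μ` is stable iff every woman is in no blocking pair and the women
draw independently, the stability probability factors over the women.
-/

section

variable {n : ℕ}

theorem exists_isExt (r : Fin n → ℕ) : ∃ P : Pref n, IsExt r P := by
  refine ⟨(Tuple.sort r)⁻¹, fun a b hab => ?_⟩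
  by_contra! h
  have := Tuple.monotone_sort r h
  simp only [Function.comp_apply, Equiv.Perm.inv_def, Equiv.apply_symm_apply] at this
  exact this.not_gt hab

theorem IsExt.swap_trans {r : Fin n → ℕ} {P : Pref n} (hP : IsExt r P) {s t : Fin n}
    (hst : r s = r t) : IsExt r ((Equiv.swap s t).trans P) := by
  have hr : ∀ x, r (Equiv.swap s t x) = r x := by
    intro x
    rcases eq_or_ne x s with rfl | hxs
    · simp [hst]
    rcases eq_or_ne x t with rfl | hxt
    · simp [hst]
    · rw [Equiv.swap_apply_of_ne_of_ne hxs hxt]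
  intro a b hab
  exact hP _ _ (by rwa [hr, hr])

def IsFirst (S : Finset (Fin n)) (s : Fin n) (P : Pref n) : Prop :=
  ∀ t ∈ S, P s ≤ P t

theorem IsFirst.swap_trans {S : Finset (Fin n)} {s t : Fin n} {P : Pref n}
    (hP : IsFirst S s P) (hs : s ∈ S) (ht : t ∈ S) :
    IsFirst S t ((Equiv.swap s t).trans P) := by
  intro u hu
  simp only [Equiv.trans_apply, Equiv.swap_apply_right]
  exact hP _ ((Equiv.swap_bijOn_self (iff_of_true hs ht)).mapsTo hu)

theorem IsFirst.eq {S : Finset (Fin n)} {s t : Fin n} {P : Pref n}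
    (hs : s ∈ S) (ht : t ∈ S) (hsP : IsFirst S s P) (htP : IsFirst S t P) : s = t :=
  P.injective ((hsP t ht).antisymm (htP s hs))

theorem exists_isFirst {S : Finset (Fin n)} (hS : S.Nonempty) (P : Pref n) :
    ∃ s ∈ S, IsFirst S s P :=
  S.exists_min_image P hS

noncomputable def extFirst (r : Fin n → ℕ) (S : Finset (Fin n)) (s : Fin n) :
    Finset (Pref n) :=
  univ.filter fun P => IsExt r P ∧ IsFirst S s P

theorem card_extFirst_eq {r : Fin n → ℕ} {S : Finset (Fin n)} {s t : Fin n}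
    (hs : s ∈ S) (ht : t ∈ S) (hst : r s = r t) :
    #(extFirst r S s) = #(extFirst r S t) := by
  have swap_swap : ∀ P : Pref n, (Equiv.swap s t).trans ((Equiv.swap s t).trans P) = P :=
    fun P => Equiv.ext fun x => by simp
  refine card_nbij' ((Equiv.swap s t).trans ·) ((Equiv.swap s t).trans ·) ?_ ?_ ?_ ?_
  · intro P hP
    simp only [extFirst, coe_filter, mem_univ, true_and, Set.mem_ofPred_eq] at hP ⊢
    exact ⟨hP.1.swap_trans hst, hP.2.swap_trans hs ht⟩
  · intro P hP
    simp only [extFirst, coe_filter, mem_univ, true_and, Set.mem_ofPred_eq] at hP ⊢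
    rw [Equiv.swap_comm]
    exact ⟨hP.1.swap_trans hst.symm, hP.2.swap_trans ht hs⟩
  · exact fun P _ => swap_swap P
  · exact fun P _ => swap_swap P

theorem card_isExt_eq_card_mul {r : Fin n → ℕ} {S : Finset (Fin n)} {s : Fin n}
    (hs : s ∈ S) (htie : ∀ t ∈ S, r t = r s) :
    #(univ.filter fun P : Pref n => IsExt r P) = #S * #(extFirst r S s) := by
  have hcover : (univ.filter fun P : Pref n => IsExt r P) = S.biUnion (extFirst r S) := by
    ext P
    simp only [extFirst, mem_filter, mem_univ, true_and, mem_biUnion]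
    constructor
    · intro hP
      obtain ⟨t, ht, htP⟩ := exists_isFirst ⟨s, hs⟩ P
      exact ⟨t, ht, hP, htP⟩
    · rintro ⟨_, _, hP, _⟩
      exact hP
  have hdisj : (S : Set (Fin n)).PairwiseDisjoint (extFirst r S) := by
    intro t ht u hu htu
    refine disjoint_left.mpr fun P htP huP => htu ?_
    simp only [extFirst, mem_filter] at htP huP
    exact IsFirst.eq ht hu htP.2.2 huP.2.2
  rw [hcover, card_biUnion hdisj, sum_congr rfl fun t ht => card_extFirst_eq ht hs (htie t ht),
    sum_const, smul_eq_mul]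

theorem sum_ite_unifExt (r : Fin n → ℕ) (E : Pref n → Prop) [DecidablePred E] :
    ∑ P, (if E P then unifExt r P else 0) =
      #(univ.filter fun P => IsExt r P ∧ E P) / #(univ.filter fun P : Pref n => IsExt r P) := by
  simp only [unifExt, ← ite_and, and_comm (a := E _), ← sum_filter, sum_const, nsmul_eq_mul,
    div_eq_mul_inv]

theorem sum_ite_unifExt_isFirst {r : Fin n → ℕ} {S : Finset (Fin n)} {s : Fin n}
    (hs : s ∈ S) (htie : ∀ t ∈ S, r t = r s) :
    ∑ P, (if IsFirst S s P then unifExt r P else 0) = (#S : ℝ)⁻¹ := by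
  have hcard := card_isExt_eq_card_mul hs htie
  obtain ⟨P, hP⟩ := exists_isExt r
  have hpos : #(extFirst r S s) ≠ 0 := by
    refine right_ne_zero_of_mul (hcard ▸ (card_pos.mpr ⟨P, ?_⟩).ne')
    simpa using hP
  rw [sum_ite_unifExt, hcard, Nat.cast_mul]
  change (#(extFirst r S s) : ℝ) / _ = _
  field_simp

-- An `abbrev`, so that `if` over it uses the same `Decidable` instance as the unfolded formula.
abbrev NoBlockingPairWith (μ : Equiv.Perm (Fin n)) (PM : Fin n → Pref n) (w : Fin n)
    (P : Pref n) : Prop :=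
  ∀ m, ¬ (μ m ≠ w ∧ PM m w < PM m (μ m) ∧ P m < P (μ.symm w))

theorem stable_iff_forall_noBlockingPairWith {μ : Equiv.Perm (Fin n)}
    {PM PW : Fin n → Pref n} : stable μ PM PW ↔ ∀ w, NoBlockingPairWith μ PM w (PW w) :=
  forall_comm

theorem stabProbW_eq_prod (PM : Fin n → Pref n) (pW : Fin n → Pref n → ℝ)
    (μ : Equiv.Perm (Fin n)) :
    stabProbW PM pW μ = ∏ w, ∑ P, if NoBlockingPairWith μ PM w P then pW w P else 0 := by
  rw [Fintype.prod_sum]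
  refine sum_congr rfl fun PW _ => ?_
  simp only [prod_ite_zero, mem_univ, forall_const, stable_iff_forall_noBlockingPairWith]

noncomputable def tiedRivals (PM : Fin n → Pref n) (r : Fin n → ℕ)
    (μ : Equiv.Perm (Fin n)) (w : Fin n) : Finset (Fin n) :=
  univ.filter fun m => μ m ≠ w ∧ PM m w < PM m (μ m) ∧ r m = r (μ.symm w)

theorem noBlockingPairWith_iff_isFirst {PM : Fin n → Pref n} {r : Fin n → ℕ}
    {μ : Equiv.Perm (Fin n)} {w : Fin n}
    (hyp : ∀ m, PM m w < PM m (μ m) → ¬ r m < r (μ.symm w)) {P : Pref n} (hP : IsExt r P) :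
    NoBlockingPairWith μ PM w P ↔
      IsFirst (insert (μ.symm w) (tiedRivals PM r μ w)) (μ.symm w) P := by
  simp only [NoBlockingPairWith, IsFirst, forall_mem_insert, le_refl, true_and, tiedRivals,
    mem_filter, mem_univ, not_and, not_lt]
  refine ⟨fun h m ⟨hm, hpref, _⟩ => h m hm hpref, fun h m hm hpref => ?_⟩
  rcases (not_lt.mp (hyp m hpref)).eq_or_lt with htie | hlt
  · exact h m ⟨hm, hpref, htie.symm⟩
  · exact (hP _ _ hlt).le

theorem sum_ite_unifExt_noBlockingPairWith (PM : Fin n → Pref n) (r : Fin n → ℕ)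
    (μ : Equiv.Perm (Fin n)) (w : Fin n)
    (hyp : ∀ m, PM m w < PM m (μ m) → ¬ r m < r (μ.symm w)) :
    ∑ P, (if NoBlockingPairWith μ PM w P then unifExt r P else 0) =
      ((#(tiedRivals PM r μ w) : ℝ) + 1)⁻¹ := by
  have hL : μ.symm w ∉ tiedRivals PM r μ w := by simp [tiedRivals]
  have htie : ∀ t ∈ insert (μ.symm w) (tiedRivals PM r μ w), r t = r (μ.symm w) := by
    simp +contextual [tiedRivals]
  rw [← Nat.cast_add_one, ← card_insert_of_notMem hL,
    ← sum_ite_unifExt_isFirst (mem_insert_self _ _) htie, sum_ite_unifExt, sum_ite_unifExt]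
  congr 3
  ext P
  simp only [mem_filter, mem_univ, true_and, and_congr_right_iff]
  exact fun hP => noBlockingPairWith_iff_isFirst hyp hP

end

/-- compact indifference model with certain men. `r w` is woman `w`'s
weak order over the men (equal values = same tie), and her realized strict order is a
uniformly random linear extension, independently across women. Let `k w` count the men
`m ≠ μ(w)` with `w ≻_m μ(m)` that lie in the same tie as `μ(w)` in `w`'s weak order.
If no man `m` with `w ≻_m μ(m)` is strictly preferred by `w` to `μ(w)`, then the
probability that `w` is in no blocking pair is `1/(k w + 1)`, and the stability
probability of `μ` is `∏ w, 1/(k w + 1)`. -/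
theorem statement4 {n : ℕ} (PM : Fin n → Pref n) (r : Fin n → Fin n → ℕ)
    (μ : Equiv.Perm (Fin n))
    (k : Fin n → ℕ)
    (hk : ∀ w, k w = (Finset.univ.filter fun m =>
      μ m ≠ w ∧ PM m w < PM m (μ m) ∧ r w m = r w (μ.symm w)).card)
    (hyp : ∀ w m, PM m w < PM m (μ m) → ¬ r w m < r w (μ.symm w)) :
    (∀ w : Fin n,
      (∑ P : Pref n,
        if (∀ m, ¬ (μ m ≠ w ∧ PM m w < PM m (μ m) ∧ P m < P (μ.symm w)))
        then unifExt (r w) P else 0) = ((k w : ℝ) + 1)⁻¹) ∧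
    stabProbW PM (fun w => unifExt (r w)) μ = ∏ w, ((k w : ℝ) + 1)⁻¹ := by
  have hfree : ∀ w, ∑ P, (if NoBlockingPairWith μ PM w P then unifExt (r w) P else 0) =
      ((k w : ℝ) + 1)⁻¹ := fun w => by
    rw [hk w]
    exact sum_ite_unifExt_noBlockingPairWith PM (r w) μ w (hyp w)
  exact ⟨hfree, (stabProbW_eq_prod PM _ μ).trans (prod_congr rfl fun w _ => hfree w)⟩
end

section
/- Let μ be a matching and suppose each of the 2n agents has exactly two possible strict preference orders. Then μ has nonzero stability probability in the lottery model if and only if the associated 2CNF formula is satisfiable, where the formula has a variable pref(c,i) for each agent c and index i ∈ {1,2}, clauses enforcing exactly one of pref(c,1), pref(c,2) per agent, and a clause (¬pref(c,i) ∨ ¬pref(c',i')) for every pair of agents c, c' on opposite sides and choices i, i' such that if c uses its i-th order and c' uses its i'-th order then (c,c') is a blocking pair for μ. -/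
open Finset
open scoped Classical BigOperators

/-- lottery model where each agent has exactly two possible strict orders
(`A i 0, A i 1` for man `i`, chosen with positive probabilities `qM i 0, qM i 1`;
similarly `B`, `qW` for women). The matching `μ` has nonzero stability probability iff
the associated 2CNF formula is satisfiable: variables `v c j` (agent `c`, index `j`),
clauses forcing exactly one of `v c 0, v c 1` per agent `c`, and for each man `m`,
woman `w` and indices `i, i'` such that the choice `(A m i, B w i')` makes `(m, w)` a
blocking pair for `μ`, the clause `¬ v (inl m) i ∨ ¬ v (inr w) i'`. -/
theorem statement10 {n : ℕ}
    (A B : Fin n → Fin 2 → Pref n) (qM qW : Fin n → Fin 2 → ℝ)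
    (hA : ∀ i, A i 0 ≠ A i 1) (hB : ∀ i, B i 0 ≠ B i 1)
    (hqM : ∀ i j, 0 < qM i j) (hqW : ∀ i j, 0 < qW i j)
    (hqMs : ∀ i, qM i 0 + qM i 1 = 1) (hqWs : ∀ i, qW i 0 + qW i 1 = 1)
    (μ : Equiv.Perm (Fin n)) :
    0 < stabProb
        (fun i P => (if A i 0 = P then qM i 0 else 0) + (if A i 1 = P then qM i 1 else 0))
        (fun i P => (if B i 0 = P then qW i 0 else 0) + (if B i 1 = P then qW i 1 else 0))
        μ ↔
      ∃ v : (Fin n ⊕ Fin n) → Fin 2 → Prop,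
        (∀ c, (v c 0 ∨ v c 1) ∧ (¬ v c 0 ∨ ¬ v c 1)) ∧
        (∀ m w : Fin n, ∀ i i' : Fin 2,
          (μ m ≠ w ∧ A m i w < A m i (μ m) ∧ B w i' m < B w i' (μ.symm w)) →
          (¬ v (Sum.inl m) i ∨ ¬ v (Sum.inr w) i')) := by
  
  classical
  set pM : Fin n → Pref n → ℝ :=
    fun i P => (if A i 0 = P then qM i 0 else 0) + (if A i 1 = P then qM i 1 else 0) with hpM
  set pW : Fin n → Pref n → ℝ :=
    fun i P => (if B i 0 = P then qW i 0 else 0) + (if B i 1 = P then qW i 1 else 0) with hpW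
  have hpMnn : ∀ i P, 0 ≤ pM i P := by
    intro i P
    have := (hqM i 0).le; have := (hqM i 1).le
    dsimp [pM]; positivity
  have hpWnn : ∀ i P, 0 ≤ pW i P := by
    intro i P
    have := (hqW i 0).le; have := (hqW i 1).le
    dsimp [pW]; positivity
  have htermnn : ∀ (PM PW : Fin n → Pref n),
      0 ≤ (if stable μ PM PW then (∏ i, pM i (PM i)) * (∏ i, pW i (PW i)) else 0) := by
    intro PM PW
    split
    · exact mul_nonneg (Finset.prod_nonneg fun i _ => hpMnn i (PM i))
        (Finset.prod_nonneg fun i _ => hpWnn i (PW i))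
    · exact le_rfl
  constructor
  · intro hpos
    -- extract a profile with positive probability and stability
    have h1 : ∃ PM : Fin n → Pref n, 0 < ∑ PW : Fin n → Pref n,
        (if stable μ PM PW then (∏ i, pM i (PM i)) * (∏ i, pW i (PW i)) else 0) := by
      by_contra h
      push_neg at h
      have : stabProb pM pW μ = 0 := by
        apply le_antisymm
        · exact Finset.sum_nonpos fun PM _ => h PM
        · exact Finset.sum_nonneg fun PM _ =>
            Finset.sum_nonneg fun PW _ => htermnn PM PW
      rw [stabProb] at hpos
      rw [stabProb] at this
      linarith
    obtain ⟨PM, hPM⟩ := h1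
    have h2 : ∃ PW : Fin n → Pref n,
        0 < (if stable μ PM PW then (∏ i, pM i (PM i)) * (∏ i, pW i (PW i)) else 0) := by
      by_contra h
      push_neg at h
      have : (∑ PW : Fin n → Pref n,
          (if stable μ PM PW then (∏ i, pM i (PM i)) * (∏ i, pW i (PW i)) else 0)) = 0 :=
        le_antisymm (Finset.sum_nonpos fun PW _ => h PW)
          (Finset.sum_nonneg fun PW _ => htermnn PM PW)
      linarith
    obtain ⟨PW, hPW⟩ := h2
    have hstab : stable μ PM PW := by
      by_contra h
      rw [if_neg h] at hPW
      linarith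
    rw [if_pos hstab] at hPW
    have hprodM : ∀ i, 0 < pM i (PM i) := by
      intro i
      rcases lt_or_eq_of_le (hpMnn i (PM i)) with h | h
      · exact h
      · exfalso
        have : (∏ i, pM i (PM i)) = 0 :=
          Finset.prod_eq_zero (Finset.mem_univ i) h.symm
        rw [this, zero_mul] at hPW
        linarith
    have hprodW : ∀ i, 0 < pW i (PW i) := by
      intro i
      rcases lt_or_eq_of_le (hpWnn i (PW i)) with h | h
      · exact h
      · exfalso
        have : (∏ i, pW i (PW i)) = 0 :=
          Finset.prod_eq_zero (Finset.mem_univ i) h.symm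
        rw [this, mul_zero] at hPW
        linarith
    refine ⟨fun c j => match c with
      | Sum.inl m => PM m = A m j
      | Sum.inr w => PW w = B w j, ?_, ?_⟩
    · rintro (m | w)
      · constructor
        · have := hprodM m
          dsimp [pM] at this
          by_contra hc
          push_neg at hc
          rw [if_neg (fun h => hc.1 h.symm), if_neg (fun h => hc.2 h.symm)] at this
          linarith
        · by_contra hc
          push_neg at hc
          exact hA m (hc.1.symm.trans hc.2)
      · constructor
        · have := hprodW w
          dsimp [pW] at this
          by_contra hc
          push_neg at hc
          rw [if_neg (fun h => hc.1 h.symm), if_neg (fun h => hc.2 h.symm)] at this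
          linarith
        · by_contra hc
          push_neg at hc
          exact hB w (hc.1.symm.trans hc.2)
    · intro m w i i' hblk
      by_contra hc
      push_neg at hc
      obtain ⟨h1, h2⟩ := hc
      have h1' : PM m = A m i := h1
      have h2' : PW w = B w i' := h2
      exact hstab m w ⟨hblk.1, by rw [h1']; exact hblk.2.1, by rw [h2']; exact hblk.2.2⟩
  · rintro ⟨v, hv, hcl⟩
    set σM : Fin n → Fin 2 := fun m => if v (Sum.inl m) 0 then 0 else 1 with hσM
    set σW : Fin n → Fin 2 := fun w => if v (Sum.inr w) 0 then 0 else 1 with hσW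
    have hvM : ∀ m, v (Sum.inl m) (σM m) := by
      intro m
      dsimp [σM]
      split
      · assumption
      · rcases (hv (Sum.inl m)).1 with h | h
        · contradiction
        · exact h
    have hvW : ∀ w, v (Sum.inr w) (σW w) := by
      intro w
      dsimp [σW]
      split
      · assumption
      · rcases (hv (Sum.inr w)).1 with h | h
        · contradiction
        · exact h
    set PM : Fin n → Pref n := fun m => A m (σM m) with hPMdef
    set PW : Fin n → Pref n := fun w => B w (σW w) with hPWdef
    have hstab : stable μ PM PW := by
      intro m w hblk
      rcases hcl m w (σM m) (σW w) ⟨hblk.1, hblk.2.1, hblk.2.2⟩ with h | h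
      · exact h (hvM m)
      · exact h (hvW w)
    have hMpos : ∀ i, 0 < pM i (PM i) := by
      intro i
      have hne : A i 0 ≠ A i 1 := hA i
      have hPMi : PM i = A i (σM i) := rfl
      have h01 : σM i = 0 ∨ σM i = 1 := by omega
      rcases h01 with h | h <;> rw [hPMi, h]
      · show 0 < (if A i 0 = A i 0 then qM i 0 else 0) + (if A i 1 = A i 0 then qM i 1 else 0)
        rw [if_pos rfl, if_neg fun hh => hne hh.symm]
        linarith [hqM i 0]
      · show 0 < (if A i 0 = A i 1 then qM i 0 else 0) + (if A i 1 = A i 1 then qM i 1 else 0)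
        rw [if_neg hne, if_pos rfl]
        linarith [hqM i 1]
    have hWpos : ∀ i, 0 < pW i (PW i) := by
      intro i
      have hne : B i 0 ≠ B i 1 := hB i
      have hPWi : PW i = B i (σW i) := rfl
      have h01 : σW i = 0 ∨ σW i = 1 := by omega
      rcases h01 with h | h <;> rw [hPWi, h]
      · show 0 < (if B i 0 = B i 0 then qW i 0 else 0) + (if B i 1 = B i 0 then qW i 1 else 0)
        rw [if_pos rfl, if_neg fun hh => hne hh.symm]
        linarith [hqW i 0]
      · show 0 < (if B i 0 = B i 1 then qW i 0 else 0) + (if B i 1 = B i 1 then qW i 1 else 0)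
        rw [if_neg hne, if_pos rfl]
        linarith [hqW i 1]
    rw [stabProb]
    apply Finset.sum_pos'
    · intro PM' _
      exact Finset.sum_nonneg fun PW' _ => htermnn PM' PW'
    · refine ⟨PM, Finset.mem_univ _, ?_⟩
      apply Finset.sum_pos'
      · intro PW' _
        exact htermnn PM PW'
      · refine ⟨PW, Finset.mem_univ _, ?_⟩
        rw [if_pos hstab]
        exact mul_pos (Finset.prod_pos fun i _ => hMpos i)
          (Finset.prod_pos fun i _ => hWpos i)
end
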